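/- arXiv:1705.11002 — 2 statements merged into one kernel-verified Lean document; each statement's English description precedes it below -/
import Mathlib

section
/- The set F_P := {b ∈ F_Q : b = max_{lex} Γb}, consisting of the points of F_Q that are lexicographically highest (in Kac coordinates [b_0, b_1, …, b_n]) within their Γ-orbit, forms a fundamental domain of the extended dual affine Weyl group W_P^aff acting on ℝⁿ, i.e., F_P contains exactly one point from each W_P^aff-orbit. -/
/-!
Write `G = N Γ'` with `N` normal. A point of `FQ` in the `G`-orbit of `x` is `nγ • x` for some
`n ∈ N`, `γ ∈ Γ'`; it is then the `N`-representative in `FQ` of `γ • x`, and so is `γ • b₀`, where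
`b₀` is that of `x`, because `Γ'` preserves `FQ` and normalises `N`. Hence `FQ` meets the
`G`-orbit of `x` exactly in the finite orbit `Γ' • b₀`, whose largest element is the unique point
of `F_P` in it.
-/

namespace MulAction

open Pointwise

theorem existsUnique_mem_orbit_forall_smul_le {H X : Type*} [Group H] [MulAction H X]
    [LinearOrder X] [Finite H] (x : X) :
    ∃! b, b ∈ orbit H x ∧ ∀ h : H, h • b ≤ b := by
  obtain ⟨b, hb, hmax⟩ := (orbit H x).exists_max_image id (Set.finite_range _)
    ⟨x, mem_orbit_self x⟩
  refine ⟨b, ⟨hb, fun h => hmax _ (mem_orbit_of_mem_orbit h hb)⟩, ?_⟩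
  rintro b' ⟨hb', hb'max⟩
  obtain ⟨h, rfl⟩ : b ∈ orbit H b' := orbit_eq_iff.mpr hb' ▸ hb
  exact le_antisymm (hmax _ hb') (hb'max h)

variable {G X : Type*} [Group G] [MulAction G X]

theorem inter_orbit_eq_orbit_of_sup_eq_top {N Γ' : Subgroup G} [N.Normal] (hsup : N ⊔ Γ' = ⊤)
    {FQ : Set X} (hfund : ∀ x : X, ∃! b, b ∈ FQ ∧ ∃ g ∈ N, g • x = b)
    (hΓ : ∀ γ ∈ Γ', ∀ b ∈ FQ, γ • b ∈ FQ) {x b₀ : X} (hb₀ : b₀ ∈ FQ) {n₀ : G} (hn₀ : n₀ ∈ N)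
    (hn₀x : n₀ • x = b₀) :
    FQ ∩ orbit G x = orbit Γ' b₀ := by
  ext b
  constructor
  · rintro ⟨hb, g, rfl⟩
    have hg : g ∈ (N : Set G) * (Γ' : Set G) := by
      rw [← Subgroup.normal_mul, hsup]
      trivial
    obtain ⟨n, hn, γ, hγ, rfl⟩ := hg
    have hconj : γ • b₀ ∈ FQ ∧ ∃ g ∈ N, g • γ • x = γ • b₀ :=
      ⟨hΓ γ hγ b₀ hb₀, γ * n₀ * γ⁻¹, Subgroup.Normal.conj_mem ‹N.Normal› n₀ hn₀ γ, by
        simp only [mul_smul, inv_smul_smul, hn₀x]⟩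
    exact ⟨⟨γ, hγ⟩, (hfund (γ • x)).unique hconj ⟨hb, n, hn, (mul_smul n γ x).symm⟩⟩
  · rintro ⟨⟨γ, hγ⟩, rfl⟩
    exact ⟨hΓ γ hγ b₀ hb₀, γ * n₀, by simp only [mul_smul, hn₀x]; rfl⟩

end MulAction

open MulAction in
theorem stmt1_general {G X : Type*} [Group G] [MulAction G X] [LinearOrder X]
    (N Γ' : Subgroup G) (hN : N.Normal) [Finite Γ']
    (hsup : N ⊔ Γ' = ⊤)
    (FQ : Set X)
    (hfund : ∀ x : X, ∃! b, b ∈ FQ ∧ ∃ g ∈ N, g • x = b)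
    (hΓ : ∀ γ ∈ Γ', ∀ b ∈ FQ, γ • b ∈ FQ) :
    ∀ x : X, ∃! b, (b ∈ FQ ∧ ∀ γ ∈ Γ', γ • b ≤ b) ∧ ∃ g : G, g • x = b := by
  intro x
  obtain ⟨b₀, ⟨hb₀, n₀, hn₀, hn₀x⟩, -⟩ := hfund x
  have horbit := inter_orbit_eq_orbit_of_sup_eq_top hsup hfund hΓ hb₀ hn₀ hn₀x
  refine (existsUnique_congr fun b => ?_).mpr (existsUnique_mem_orbit_forall_smul_le (H := Γ') b₀)
  rw [← horbit, Set.mem_inter_iff, mem_orbit_iff, Subtype.forall]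
  tauto

/-- The set F_P of points of the fundamental domain F_Q (of the normal
subgroup `N = W_Q^aff` of `G = W_P^aff`) that are highest, in the (lexicographic) linear
order on X, within their Γ-orbit, is a fundamental domain of the extended dual affine
Weyl group G: it contains exactly one point from each G-orbit. -/
theorem stmt1 {G X : Type*} [Group G] [MulAction G X] [LinearOrder X]
    (N Γ' : Subgroup G) (hN : N.Normal) [Finite Γ']
    (hinf : N ⊓ Γ' = ⊥) (hsup : N ⊔ Γ' = ⊤)
    (FQ : Set X)
    (hfund : ∀ x : X, ∃! b, b ∈ FQ ∧ ∃ g ∈ N, g • x = b)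
    (hΓ : ∀ γ ∈ Γ', ∀ b ∈ FQ, γ • b ∈ FQ) :
    ∀ x : X, ∃! b, (b ∈ FQ ∧ ∀ γ ∈ Γ', γ • b ≤ b) ∧ ∃ g : G, g • x = b :=
  stmt1_general N Γ' hN hsup FQ hfund hΓ
end

section
/- Let σ be a sign homomorphism of the Weyl group W and let b' ∈ M(F_P ∖ F_P^σ), i.e., b'/M lies in the fundamental domain F_P but its stabilizer in W_P^aff contains an element with negative σ∘ψ̂ value. Then the Weyl orbit function vanishes at every point of the refined dual root lattice: φ^σ_{b'}(s) = 0 for all s ∈ (1/M)Q^∨. -/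
/-!
If `T(p) w` fixes `b'/M` with `σ w = -1`, then `w b' = b' - M p`, so for every `w'` the phases
`⟪w' w b', s⟫` and `⟪w' b', s⟫` differ by `⟪w' p, M s⟫ ∈ ℤ`. Reindexing the orbit sum by
`w' ↦ w' w` therefore leaves every exponential unchanged and flips every sign, so the sum
equals its own negative.
-/

open Complex

theorem sum_mul_eq_zero_of_mul_right_invariant {W R : Type*} [Group W] [Fintype W]
    [CommRing R] [IsAddTorsionFree R] (χ : W →* R) (f : W → R) {w : W} (hχw : χ w = -1)
    (hf : ∀ w', f (w' * w) = f w') :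
    ∑ w', χ w' * f w' = 0 := by
  refine self_eq_neg.mp ?_
  calc ∑ w', χ w' * f w'
      = ∑ w', χ (w' * w) * f (w' * w) := (Equiv.sum_comp (Equiv.mulRight w) _).symm
    _ = -∑ w', χ w' * f w' := by
      simp only [map_mul, hχw, hf, ← Finset.sum_neg_distrib]
      ring_nf

theorem LinearMap.apply_eq_sub_smul_of_apply_inv_smul_add_eq {𝕜 E : Type*} [Field 𝕜]
    [AddCommGroup E] [Module 𝕜 E] (f : E →ₗ[𝕜] E) {c : 𝕜} (hc : c ≠ 0) {b p : E}
    (h : f (c⁻¹ • b) + p = c⁻¹ • b) :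
    f b = b - c • p := by
  have h' := congrArg (c • ·) h
  simp only [map_smul, smul_add, smul_inv_smul₀ hc] at h'
  exact eq_sub_of_add_eq h'

theorem cexp_two_pi_I_mul_eq_of_sub_eq_int {x y : ℝ} {z : ℤ} (h : x - y = z) :
    exp (2 * Real.pi * I * x) = exp (2 * Real.pi * I * y) := by
  rw [exp_eq_exp_iff_exists_int]
  exact ⟨z, by rw [eq_add_of_sub_eq h]; push_cast; ring⟩

section OrbitPhase

variable {n : ℕ} {W : Type*} [Group W]
  (ρ : W →* (EuclideanSpace ℝ (Fin n) ≃ₗᵢ[ℝ] EuclideanSpace ℝ (Fin n)))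

theorem inner_apply_sub_inner_apply_mul_eq_int {Qv P : AddSubgroup (EuclideanSpace ℝ (Fin n))}
    (hdual : ∀ p ∈ P, ∀ q ∈ Qv, ∃ z : ℤ, (inner ℝ p q : ℝ) = z)
    (hWP : ∀ (w : W), ∀ p ∈ P, ρ w p ∈ P) {c : ℝ} {w : W} {b p s : EuclideanSpace ℝ (Fin n)}
    (hp : p ∈ P) (hwb : ρ w b = b - c • p) (hs : c • s ∈ Qv) (w' : W) :
    ∃ z : ℤ, (inner ℝ (ρ w' b) s : ℝ) - inner ℝ (ρ (w' * w) b) s = z := by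
  obtain ⟨z, hz⟩ := hdual _ (hWP w' p hp) _ hs
  refine ⟨z, ?_⟩
  rw [map_mul, LinearIsometryEquiv.coe_mul, Function.comp_apply, hwb, map_sub, map_smul, inner_sub_left,
    real_inner_smul_left, ← real_inner_smul_right, hz, sub_sub_cancel]

end OrbitPhase

theorem stmt4_general {n : ℕ} {W : Type*} [Group W] [Fintype W]
    (ρ : W →* (EuclideanSpace ℝ (Fin n) ≃ₗᵢ[ℝ] EuclideanSpace ℝ (Fin n)))
    (σ : W →* ℝˣ)
    (Qv P : AddSubgroup (EuclideanSpace ℝ (Fin n)))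
    (hdual : ∀ p ∈ P, ∀ q ∈ Qv, ∃ z : ℤ, (inner ℝ p q : ℝ) = z)
    (hWP : ∀ (w : W), ∀ p ∈ P, ρ w p ∈ P)
    (M : ℕ) (hM : 0 < M)
    (b' : EuclideanSpace ℝ (Fin n))
    (hneg : ∃ (w : W), ∃ p ∈ P, (σ w : ℝ) = -1 ∧
      ρ w ((M : ℝ)⁻¹ • b') + p = (M : ℝ)⁻¹ • b')
    (s : EuclideanSpace ℝ (Fin n)) (hs : (M : ℝ) • s ∈ Qv) :
    ∑ w' : W, ((σ w' : ℝ) : ℂ) *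
        Complex.exp (2 * Real.pi * Complex.I *
          ((inner ℝ (ρ w' b') s : ℝ) : ℂ)) = 0 := by
  obtain ⟨w, p, hp, hσw, hfix⟩ := hneg
  have hwb : ρ w b' = b' - (M : ℝ) • p :=
    (ρ w).toLinearMap.apply_eq_sub_smul_of_apply_inv_smul_add_eq (by positivity) hfix
  let χ : W →* ℂ := ofRealHom.toMonoidHom.comp ((Units.coeHom ℝ).comp σ)
  refine sum_mul_eq_zero_of_mul_right_invariant χ _ (w := w) (by simp [χ, hσw]) fun w' => ?_
  obtain ⟨z, hz⟩ := inner_apply_sub_inner_apply_mul_eq_int ρ hdual hWP hp hwb hs w'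
  exact (cexp_two_pi_I_mul_eq_of_sub_eq_int hz).symm

/-- if b' ∈ M(F_P ∖ F_P^σ), i.e. b'/M lies in the fundamental domain F_P
of W_P^aff and its stabilizer in W_P^aff contains an element T(p)w with σ(w) = -1, then
the Weyl orbit function φ^σ_{b'} vanishes at every point s of the refined dual root
lattice (1/M)Q^∨. -/
theorem stmt4 {n : ℕ} {W : Type*} [Group W] [Fintype W]
    (ρ : W →* (EuclideanSpace ℝ (Fin n) ≃ₗᵢ[ℝ] EuclideanSpace ℝ (Fin n)))
    (σ : W →* ℝˣ) (hσ : ∀ w : W, (σ w : ℝ) = 1 ∨ (σ w : ℝ) = -1)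
    (Qv P : AddSubgroup (EuclideanSpace ℝ (Fin n)))
    (hdual : ∀ p ∈ P, ∀ q ∈ Qv, ∃ z : ℤ, (inner ℝ p q : ℝ) = z)
    (hWP : ∀ (w : W), ∀ p ∈ P, ρ w p ∈ P)
    (M : ℕ) (hM : 0 < M)
    (FP : Set (EuclideanSpace ℝ (Fin n)))
    (hFP : ∀ x, ∃! c, c ∈ FP ∧ ∃ (w : W), ∃ p ∈ P, ρ w x + p = c)
    (b' : EuclideanSpace ℝ (Fin n))
    (hb' : (M : ℝ)⁻¹ • b' ∈ FP)
    (hneg : ∃ (w : W), ∃ p ∈ P, (σ w : ℝ) = -1 ∧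
      ρ w ((M : ℝ)⁻¹ • b') + p = (M : ℝ)⁻¹ • b')
    (s : EuclideanSpace ℝ (Fin n)) (hs : (M : ℝ) • s ∈ Qv) :
    ∑ w' : W, ((σ w' : ℝ) : ℂ) *
        Complex.exp (2 * Real.pi * Complex.I *
          ((inner ℝ (ρ w' b') s : ℝ) : ℂ)) = 0 :=
  stmt4_general ρ σ Qv P hdual hWP M hM b' hneg s hs
end
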